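/- arXiv:2410.03106 — 2 statements merged into one kernel-verified Lean document; each statement's English description precedes it below -/
import Mathlib

section
/- Fix N ≥ 1 and for each player i ∈ {1,…,N} let B^i ∈ ℝ^{n×m_i}, Q^i ∈ ℝ^{n×n}, P^i ∈ ℝ^{n×n} symmetric positive semidefinite, R^i ∈ ℝ^{m_i×m_i} symmetric positive definite, and A ∈ ℝ^{n×n}. Suppose the gains (K^1,…,K^N) satisfy the coupled policy-update equations K^i = −(R^i + (B^i)ᵀP^iB^i)⁻¹ (B^i)ᵀ P^i (A + Σ_{j≠i} B^j K^j) for all i. Then (K^1,…,K^N) is a Nash equilibrium of the one-step game: for each i and every K' ∈ ℝ^{m_i×n}, Q^i + (K^i)ᵀR^iK^i + (Ā^i + B^iK^i)ᵀ P^i (Ā^i + B^iK^i) ⪯ Q^i + (K')ᵀR^iK' + (Ā^i + B^iK')ᵀ P^i (Ā^i + B^iK') in the Loewner order, where Ā^i = A + Σ_{j≠i} B^j K^j. -/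
open Matrix Finset

/-- Gains satisfying the coupled policy-update equations form a Nash equilibrium of the
one-step game: each player's one-step cost matrix under its own gain is dominated, in the
Loewner order, by the one-step cost matrix of any unilateral deviation. -/
theorem coupled_policy_update_is_one_step_nash {n N : ℕ} (hN : 1 ≤ N) {m : Fin N → ℕ}
    (B : ∀ i, Matrix (Fin n) (Fin (m i)) ℝ)
    (Q P : Fin N → Matrix (Fin n) (Fin n) ℝ)
    (R : ∀ i, Matrix (Fin (m i)) (Fin (m i)) ℝ)
    (A : Matrix (Fin n) (Fin n) ℝ)
    (hP : ∀ i, (P i).PosSemidef) (hR : ∀ i, (R i).PosDef)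
    (K : ∀ i, Matrix (Fin (m i)) (Fin n) ℝ)
    (hK : ∀ i, K i = -((R i + (B i)ᵀ * P i * B i)⁻¹ *
      ((B i)ᵀ * P i * (A + ∑ j ∈ univ.erase i, B j * K j))))
    (Abar : Fin N → Matrix (Fin n) (Fin n) ℝ)
    (hAbar : ∀ i, Abar i = A + ∑ j ∈ univ.erase i, B j * K j) :
    ∀ i, ∀ K' : Matrix (Fin (m i)) (Fin n) ℝ,
      ((Q i + K'ᵀ * R i * K' + (Abar i + B i * K')ᵀ * P i * (Abar i + B i * K')) -
       (Q i + (K i)ᵀ * R i * K i +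
         (Abar i + B i * K i)ᵀ * P i * (Abar i + B i * K i))).PosSemidef := by
  intro i K'
  set S := R i + (B i)ᵀ * P i * B i with hSdef
  have hpsd : ((B i)ᵀ * P i * B i).PosSemidef := by
    have := (hP i).conjTranspose_mul_mul_same (B i)
    simpa using this
  have hS : S.PosDef := (hR i).add_posSemidef hpsd
  have hSsym : Sᵀ = S := by
    have := hS.isHermitian
    simpa [Matrix.IsHermitian] using this
  have hPsym : (P i)ᵀ = P i := by
    have := (hP i).isHermitian
    simpa [Matrix.IsHermitian] using this
  have hdet : IsUnit S.det := isUnit_iff_isUnit_det S |>.1 hS.isUnit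
  have h1 : (B i)ᵀ * P i * Abar i = -(S * K i) := by
    rw [hK i, ← hAbar i, Matrix.mul_neg, Matrix.mul_nonsing_inv_cancel_left _ _ hdet, neg_neg]
  have h2 : (Abar i)ᵀ * P i * B i = -((K i)ᵀ * S) := by
    have := congrArg Matrix.transpose h1
    simpa [Matrix.transpose_mul, Matrix.mul_assoc, hSsym, hPsym] using this
  have expand : ∀ (L : Matrix (Fin (m i)) (Fin n) ℝ),
      Q i + Lᵀ * R i * L + (Abar i + B i * L)ᵀ * P i * (Abar i + B i * L)
        = Q i + Lᵀ * S * L + Lᵀ * ((B i)ᵀ * P i * Abar i)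
          + ((Abar i)ᵀ * P i * B i) * L + (Abar i)ᵀ * P i * Abar i := by
    intro L
    simp only [hSdef, Matrix.transpose_add, Matrix.transpose_mul, Matrix.add_mul,
      Matrix.mul_add, Matrix.mul_assoc]
    abel
  have key : (Q i + K'ᵀ * R i * K' + (Abar i + B i * K')ᵀ * P i * (Abar i + B i * K')) -
       (Q i + (K i)ᵀ * R i * K i +
         (Abar i + B i * K i)ᵀ * P i * (Abar i + B i * K i))
      = (K' - K i)ᵀ * S * (K' - K i) := by
    rw [expand K', expand (K i), h1, h2]
    simp only [Matrix.transpose_sub, Matrix.sub_mul, Matrix.mul_sub, Matrix.mul_neg,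
      Matrix.neg_mul, Matrix.mul_assoc]
    abel
  rw [key]
  have := hS.posSemidef.conjTranspose_mul_mul_same (K' - K i)
  simpa using this
end

section
/- Fix N ≥ 1, A ∈ ℝ^{n×n}, and for each player i ∈ {1,…,N} let B^i ∈ ℝ^{n×m_i}, Q^i ∈ ℝ^{n×n} symmetric positive semidefinite, and R^i ∈ ℝ^{m_i×m_i} symmetric positive definite. Suppose gains K^{i*} ∈ ℝ^{m_i×n} and symmetric positive semidefinite matrices P^{i*} ∈ ℝ^{n×n} satisfy the coupled algebraic Riccati equations K^{i*} = −(R^i + (B^i)ᵀP^{i*}B^i)⁻¹ (B^i)ᵀ P^{i*} Ā^{i*} and P^{i*} = Q^i + (K^{i*})ᵀR^iK^{i*} + (Ā^{i*} + B^iK^{i*})ᵀ P^{i*} (Ā^{i*} + B^iK^{i*}), where Ā^{i*} = A + Σ_{j≠i} B^j K^{j*}, and suppose the closed-loop matrix A + Σ_{j=1}^N B^j K^{j*} has spectral radius strictly less than 1. Then (K^{1*},…,K^{N*}) is a Nash equilibrium among stabilizing stationary linear feedback policies: for each player i, every initial state x₀ ∈ ℝ^n, and every gain K^i ∈ ℝ^{m_i×n}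 such that Ā^{i*} + B^iK^i has spectral radius strictly less than 1, the unilateral-deviation cost satisfies Σ_{t=0}^∞ ( y_tᵀ Q^i y_t + (K^iy_t)ᵀ R^i (K^iy_t) ) ≥ x₀ᵀ P^{i*} x₀, where y_0 = x₀ and y_{t+1} = (Ā^{i*} + B^iK^i) y_t. -/
open Matrix Finset Filter


private lemma geom_bound' {k : ℕ} (F : Matrix (Fin k) (Fin k) ℂ)
    (h : ∀ μ ∈ spectrum ℂ F, ‖μ‖ < 1) :
    ∃ C r : ℝ, 0 ≤ C ∧ 0 ≤ r ∧ r < 1 ∧ ∀ t (i j : Fin k), ‖(F ^ t) i j‖ ≤ C * r ^ t := by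
  rcases Nat.eq_zero_or_pos k with hk | hk
  · subst hk
    exact ⟨1, 0, zero_le_one, le_refl _, one_pos, fun t i j => i.elim0⟩
  haveI : NeZero k := ⟨hk.ne'⟩
  letI : NormedRing (Matrix (Fin k) (Fin k) ℂ) := Matrix.linftyOpNormedRing
  letI : NormedAlgebra ℂ (Matrix (Fin k) (Fin k) ℂ) := Matrix.linftyOpNormedAlgebra
  haveI : CompleteSpace (Matrix (Fin k) (Fin k) ℂ) := FiniteDimensional.complete ℂ _
  have hρ : spectralRadius ℂ F < 1 := by
    have := spectrum.spectralRadius_lt_of_forall_lt (a := F) (r := 1)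
      (fun z hz => by exact_mod_cast h z hz)
    simpa using this
  set ρ := spectralRadius ℂ F with hρdef
  have hρtop : ρ ≠ ⊤ := hρ.ne_top
  have hρ1 : ρ.toNNReal < 1 := by
    rw [← ENNReal.coe_lt_one_iff, ENNReal.coe_toNNReal hρtop]; exact hρ
  set s : NNReal := (ρ.toNNReal + 1) / 2 with hsdef
  have hs1 : s < 1 := by
    rw [hsdef, div_lt_one (by norm_num)]
    calc ρ.toNNReal + 1 < 1 + 1 := by exact add_lt_add_left hρ1 1
    _ = 2 := by norm_num
  have hs0 : 0 < s := by
    rw [hsdef]; positivity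
  have hρs : ρ < (s : ENNReal) := by
    rw [← ENNReal.coe_toNNReal hρtop, ENNReal.coe_lt_coe, hsdef]
    rw [lt_div_iff₀ (by norm_num)]
    calc ρ.toNNReal * 2 = ρ.toNNReal + ρ.toNNReal := by ring
    _ < ρ.toNNReal + 1 := by exact add_lt_add_right hρ1 _
  have hG := spectrum.pow_nnnorm_pow_one_div_tendsto_nhds_spectralRadius F
  have hev : ∀ᶠ (t : ℕ) in atTop, ((‖F ^ t‖₊ : ENNReal)) ^ (1 / (t:ℝ)) < (s : ENNReal) :=
    hG.eventually_lt_const hρs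
  obtain ⟨T, hT⟩ := hev.exists_forall_of_atTop
  have hbig : ∀ t, T + 1 ≤ t → ‖F ^ t‖ ≤ (s : ℝ) ^ t := by
    intro t ht
    have h1 := hT t (by omega)
    have ht0 : (1/(t:ℝ)) * (t:ℝ) = 1 := by
      rw [one_div_mul_cancel]; exact_mod_cast (by omega : t ≠ 0)
    have h2 : ((‖F ^ t‖₊ : ENNReal)) ≤ ((s ^ t : NNReal) : ENNReal) := by
      rw [ENNReal.coe_pow, ← ENNReal.rpow_natCast ((s:ENNReal)) t]
      calc (‖F ^ t‖₊ : ENNReal) = ((‖F ^ t‖₊ : ENNReal) ^ (1/(t:ℝ))) ^ (t:ℝ) := by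
            rw [← ENNReal.rpow_mul, ht0, ENNReal.rpow_one]
        _ ≤ (s : ENNReal) ^ (t:ℝ) := ENNReal.rpow_le_rpow h1.le (Nat.cast_nonneg t)
    rw [ENNReal.coe_le_coe] at h2
    calc ‖F ^ t‖ = ((‖F ^ t‖₊ : NNReal) : ℝ) := rfl
      _ ≤ ((s ^ t : NNReal) : ℝ) := by exact_mod_cast h2
      _ = (s:ℝ) ^ t := by push_cast; ring
  set C0 : ℝ := (Finset.range (T + 2)).sup' (Finset.nonempty_range_add_one) (fun n => ‖F ^ n‖ / (s:ℝ) ^ n) with hC0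
  have hs0' : (0:ℝ) < (s:ℝ) := hs0
  refine ⟨max 1 C0, s, le_trans zero_le_one (le_max_left _ _), s.coe_nonneg, by exact_mod_cast hs1, ?_⟩
  intro t i j
  have hentry : ‖(F ^ t) i j‖ ≤ ‖F ^ t‖ := by
    have h4 : ‖(F ^ t) i j‖₊ ≤ ‖F ^ t‖₊ := by
      rw [Matrix.linfty_opNNNorm_def]
      exact le_trans (Finset.single_le_sum (f := fun j' => ‖(F ^ t) i j'‖₊)
        (fun _ _ => zero_le) (Finset.mem_univ j)) (Finset.le_sup (f := fun i => ∑ j : Fin k, ‖(F ^ t) i j‖₊) (Finset.mem_univ i))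
    exact_mod_cast h4
  have hst : (0:ℝ) < (s:ℝ) ^ t := by positivity
  rcases le_or_gt t (T + 1) with hc | hc
  · have hmem : t ∈ Finset.range (T + 2) := by simp; omega
    have h5 := Finset.le_sup' (f := fun n => ‖F ^ n‖ / (s:ℝ) ^ n) hmem
    calc ‖(F ^ t) i j‖ ≤ ‖F ^ t‖ := hentry
      _ = (‖F ^ t‖ / (s:ℝ) ^ t) * (s:ℝ) ^ t := by field_simp
      _ ≤ max 1 C0 * (s:ℝ) ^ t := by
          gcongr
          exact le_trans h5 (le_max_right _ _)
  · calc ‖(F ^ t) i j‖ ≤ ‖F ^ t‖ := hentry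
      _ ≤ (s:ℝ) ^ t := hbig t (by omega)
      _ = 1 * (s:ℝ) ^ t := (one_mul _).symm
      _ ≤ max 1 C0 * (s:ℝ) ^ t := by gcongr; exact le_max_left _ _


private lemma quad_bound' {a : ℕ} (G : Matrix (Fin a) (Fin a) ℝ) (v : Fin a → ℝ) (c : ℝ)
    (hv : ∀ i, |v i| ≤ c) :
    v ⬝ᵥ (G *ᵥ v) ≤ (∑ i, ∑ j, |G i j|) * (c * c) := by
  have h1 : v ⬝ᵥ (G *ᵥ v) = ∑ i, ∑ j, v i * (G i j * v j) := by
    simp [dotProduct, mulVec, Finset.mul_sum]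
  rw [h1, Finset.sum_mul]
  refine Finset.sum_le_sum fun i _ => ?_
  rw [Finset.sum_mul]
  refine Finset.sum_le_sum fun j _ => ?_
  calc v i * (G i j * v j) ≤ |v i * (G i j * v j)| := le_abs_self _
    _ = |G i j| * (|v i| * |v j|) := by rw [abs_mul, abs_mul]; ring
    _ ≤ |G i j| * (c * c) := by
        have hc : 0 ≤ c := le_trans (abs_nonneg _) (hv i)
        exact mul_le_mul_of_nonneg_left
          (mul_le_mul (hv i) (hv j) (abs_nonneg _) hc) (abs_nonneg _)

private lemma dot_transpose' {a b : ℕ} (M : Matrix (Fin b) (Fin a) ℝ) (v : Fin a → ℝ)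
    (w : Fin b → ℝ) : v ⬝ᵥ (Mᵀ *ᵥ w) = (M *ᵥ v) ⬝ᵥ w := by
  rw [Matrix.dotProduct_mulVec, Matrix.vecMul_transpose]


private lemma riccati_key' {n m : ℕ} (Qi Pi Ab : Matrix (Fin n) (Fin n) ℝ)
    (Bi : Matrix (Fin n) (Fin m) ℝ) (Ri : Matrix (Fin m) (Fin m) ℝ)
    (Kst K : Matrix (Fin m) (Fin n) ℝ)
    (hPt : Piᵀ = Pi) (hRt : Riᵀ = Ri)
    (hMKs : (Ri + Biᵀ * Pi * Bi) * Kst = -(Biᵀ * Pi * Ab)) :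
    Qi + Kᵀ * Ri * K + (Ab + Bi * K)ᵀ * Pi * (Ab + Bi * K)
      = (Qi + Kstᵀ * Ri * Kst + (Ab + Bi * Kst)ᵀ * Pi * (Ab + Bi * Kst))
        + (K - Kst)ᵀ * (Ri + Biᵀ * Pi * Bi) * (K - Kst) := by
  have hX : Biᵀ * Pi * Ab = -((Ri + Biᵀ * Pi * Bi) * Kst) := by rw [hMKs, neg_neg]
  have hexp0 : ∀ J : Matrix (Fin m) (Fin n) ℝ,
      (Ab + Bi * J)ᵀ * Pi * (Ab + Bi * J)
        = Abᵀ * Pi * Ab + Jᵀ * (Biᵀ * Pi * Ab) + (Biᵀ * Pi * Ab)ᵀ * J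
          + Jᵀ * (Biᵀ * Pi * Bi) * J := by
    intro J
    simp only [transpose_add, transpose_mul, transpose_transpose, Matrix.add_mul, Matrix.mul_add,
      Matrix.mul_assoc, hPt]
    abel
  rw [hexp0 K, hexp0 Kst, hX]
  simp only [transpose_neg, transpose_add, transpose_mul, transpose_transpose, transpose_sub,
    Matrix.neg_mul, Matrix.mul_neg, Matrix.add_mul, Matrix.mul_add, Matrix.sub_mul, Matrix.mul_sub, Matrix.mul_assoc,
    hPt, hRt]
  abel

/-- Under the coupled algebraic Riccati equations with `P* ⪰ 0` and a stable closed loop,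
the gains `(K¹*,…,Kᴺ*)` form a Nash equilibrium among stabilizing stationary linear
feedback policies: any stabilizing unilateral deviation of player `i` incurs an
infinite-horizon cost at least `x₀ᵀ Pᵢ* x₀` (restricted version of Proposition 6.3 of
Başar–Olsder). -/
theorem coupled_riccati_is_nash_among_stabilizing {n N : ℕ} (hN : 1 ≤ N)
    {m : Fin N → ℕ}
    (A : Matrix (Fin n) (Fin n) ℝ)
    (B : ∀ i, Matrix (Fin n) (Fin (m i)) ℝ)
    (Q P : Fin N → Matrix (Fin n) (Fin n) ℝ)
    (R : ∀ i, Matrix (Fin (m i)) (Fin (m i)) ℝ)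
    (Ks : ∀ i, Matrix (Fin (m i)) (Fin n) ℝ)
    (hQ : ∀ i, (Q i).PosSemidef) (hR : ∀ i, (R i).PosDef)
    (hP : ∀ i, (P i).PosSemidef)
    (Abar : Fin N → Matrix (Fin n) (Fin n) ℝ)
    (hAbar : ∀ i, Abar i = A + ∑ j ∈ univ.erase i, B j * Ks j)
    (hK : ∀ i, Ks i = -((R i + (B i)ᵀ * P i * B i)⁻¹ * ((B i)ᵀ * P i * Abar i)))
    (hRic : ∀ i, P i = Q i + (Ks i)ᵀ * R i * Ks i +
      (Abar i + B i * Ks i)ᵀ * P i * (Abar i + B i * Ks i))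
    (Acl : Matrix (Fin n) (Fin n) ℝ) (hAcl : Acl = A + ∑ j, B j * Ks j)
    (hstab : ∀ μ ∈ spectrum ℂ (Acl.map (Complex.ofReal)), ‖μ‖ < 1) :
    ∀ i, ∀ x₀ : Fin n → ℝ, ∀ K : Matrix (Fin (m i)) (Fin n) ℝ,
      (∀ μ ∈ spectrum ℂ ((Abar i + B i * K).map (Complex.ofReal)), ‖μ‖ < 1) →
      ∀ y : ℕ → Fin n → ℝ,
        y 0 = x₀ → (∀ t, y (t + 1) = (Abar i + B i * K) *ᵥ y t) →
        x₀ ⬝ᵥ (P i *ᵥ x₀) ≤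
          ∑' t : ℕ, ((y t ⬝ᵥ (Q i *ᵥ y t)) + ((K *ᵥ y t) ⬝ᵥ (R i *ᵥ (K *ᵥ y t)))) := by
  intro i x₀ K hKstab y hy0 hyr
  -- abbreviations
  set F : Matrix (Fin n) (Fin n) ℝ := Abar i + B i * K with hF
  set D : Matrix (Fin (m i)) (Fin n) ℝ := K - Ks i with hD
  set M : Matrix (Fin (m i)) (Fin (m i)) ℝ := R i + (B i)ᵀ * P i * B i with hM
  -- transposes
  have hPt : (P i)ᵀ = P i := by
    have h0 := (hP i).1
    rwa [Matrix.IsHermitian, Matrix.conjTranspose_eq_transpose_of_trivial] at h0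
  have hRt : (R i)ᵀ = R i := by
    have h0 := (hR i).1
    rwa [Matrix.IsHermitian, Matrix.conjTranspose_eq_transpose_of_trivial] at h0
  -- M is positive definite
  have hBPB : ((B i)ᵀ * P i * B i).PosSemidef := by
    have h0 := (hP i).conjTranspose_mul_mul_same (B i)
    rwa [Matrix.conjTranspose_eq_transpose_of_trivial] at h0
  have hMpd : M.PosDef := (hR i).add_posSemidef hBPB
  -- the Riccati gain identity
  have hMKs : M * Ks i = -((B i)ᵀ * P i * Abar i) := by
    rw [hK i, Matrix.mul_neg, ← Matrix.mul_assoc, Matrix.mul_nonsing_inv _ hMpd.det_pos.ne'.isUnit,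
      Matrix.one_mul]
  -- the key completion-of-squares identity
  have hkey : Q i + Kᵀ * R i * K + Fᵀ * P i * F = P i + Dᵀ * M * D := by
    have h0 := riccati_key' (Q i) (P i) (Abar i) (B i) (R i) (Ks i) K hPt hRt hMKs
    rw [← hRic i] at h0
    exact h0
  -- the quadratic-form version
  have hquad : ∀ v : Fin n → ℝ,
      v ⬝ᵥ (Q i *ᵥ v) + (K *ᵥ v) ⬝ᵥ (R i *ᵥ (K *ᵥ v))
        = v ⬝ᵥ (P i *ᵥ v) - (F *ᵥ v) ⬝ᵥ (P i *ᵥ (F *ᵥ v))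
          + (D *ᵥ v) ⬝ᵥ (M *ᵥ (D *ᵥ v)) := by
    intro v
    have h0 := congrArg (fun Z : Matrix (Fin n) (Fin n) ℝ => v ⬝ᵥ (Z *ᵥ v)) hkey
    simp only [Matrix.add_mulVec, dotProduct_add, ← Matrix.mulVec_mulVec] at h0
    rw [dot_transpose' K v, dot_transpose' F v, dot_transpose' D v] at h0
    linarith
  -- nonnegativity facts
  have hMnn : ∀ v : Fin n → ℝ, 0 ≤ (D *ᵥ v) ⬝ᵥ (M *ᵥ (D *ᵥ v)) := by
    intro v
    have h0 := hMpd.posSemidef.dotProduct_mulVec_nonneg (D *ᵥ v)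
    simpa using h0
  have hcnn : ∀ t, 0 ≤ y t ⬝ᵥ (Q i *ᵥ y t) + (K *ᵥ y t) ⬝ᵥ (R i *ᵥ (K *ᵥ y t)) := by
    intro t
    have h1 := (hQ i).dotProduct_mulVec_nonneg (y t)
    have h2 := (hR i).posSemidef.dotProduct_mulVec_nonneg (K *ᵥ y t)
    simp only [star_trivial] at h1 h2
    linarith
  -- partial sums dominate
  have hpartial : ∀ T, x₀ ⬝ᵥ (P i *ᵥ x₀) - y T ⬝ᵥ (P i *ᵥ y T) ≤
      ∑ t ∈ Finset.range T, (y t ⬝ᵥ (Q i *ᵥ y t) + (K *ᵥ y t) ⬝ᵥ (R i *ᵥ (K *ᵥ y t))) := by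
    intro T
    induction T with
    | zero => simp [hy0]
    | succ T ih =>
        rw [Finset.sum_range_succ]
        have hs := hquad (y T)
        rw [← hyr T] at hs
        have he := hMnn (y T)
        linarith
  -- geometric bound on trajectories
  obtain ⟨C, r, hC0, hr0, hr1, hgb⟩ := geom_bound' (F.map Complex.ofReal) hKstab
  have hyt : ∀ t, y t = F ^ t *ᵥ x₀ := by
    intro t
    induction t with
    | zero => simpa using hy0
    | succ t ih => rw [hyr t, ih, mulVec_mulVec, ← pow_succ']
  have hpowmap : ∀ t, (F.map Complex.ofReal) ^ t = (F ^ t).map Complex.ofReal := by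
    intro t
    induction t with
    | zero => simp [Matrix.map_one]
    | succ t ih =>
        rw [pow_succ, pow_succ, ih]
        ext j l
        simp [Matrix.mul_apply, Matrix.map_apply]
  set Cx : ℝ := C * ∑ l, |x₀ l| with hCx
  have hCx0 : 0 ≤ Cx := by
    apply mul_nonneg hC0
    exact Finset.sum_nonneg fun l _ => abs_nonneg _
  have hyb : ∀ t j, |y t j| ≤ Cx * r ^ t := by
    intro t j
    have hentry : ∀ l, |(F ^ t) j l| ≤ C * r ^ t := by
      intro l
      have h0 := hgb t j l
      rw [hpowmap t] at h0
      simpa [Matrix.map_apply, Complex.norm_real] using h0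
    rw [hyt t]
    calc |(F ^ t *ᵥ x₀) j| = |∑ l, (F ^ t) j l * x₀ l| := by simp [Matrix.mulVec, dotProduct]
      _ ≤ ∑ l, |(F ^ t) j l * x₀ l| := Finset.abs_sum_le_sum_abs _ _
      _ = ∑ l, |(F ^ t) j l| * |x₀ l| := by simp [abs_mul]
      _ ≤ ∑ l, (C * r ^ t) * |x₀ l| :=
          Finset.sum_le_sum fun l _ =>
            mul_le_mul_of_nonneg_right (hentry l) (abs_nonneg _)
      _ = Cx * r ^ t := by rw [← Finset.mul_sum, hCx]; ring
  -- stage cost as a single quadratic form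
  set G : Matrix (Fin n) (Fin n) ℝ := Q i + Kᵀ * R i * K with hG
  have hcform : ∀ t, y t ⬝ᵥ (Q i *ᵥ y t) + (K *ᵥ y t) ⬝ᵥ (R i *ᵥ (K *ᵥ y t))
      = y t ⬝ᵥ (G *ᵥ y t) := by
    intro t
    rw [hG]
    simp only [Matrix.add_mulVec, dotProduct_add, ← Matrix.mulVec_mulVec]
    rw [dot_transpose' K (y t)]
  set SG : ℝ := ∑ a, ∑ b, |G a b| with hSG
  have hle : ∀ t, y t ⬝ᵥ (Q i *ᵥ y t) + (K *ᵥ y t) ⬝ᵥ (R i *ᵥ (K *ᵥ y t))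
      ≤ (SG * (Cx * Cx)) * (r * r) ^ t := by
    intro t
    rw [hcform t]
    have h0 := quad_bound' G (y t) (Cx * r ^ t) (fun j => hyb t j)
    calc y t ⬝ᵥ (G *ᵥ y t) ≤ SG * ((Cx * r ^ t) * (Cx * r ^ t)) := h0
      _ = (SG * (Cx * Cx)) * (r * r) ^ t := by rw [mul_pow]; ring
  have hrr1 : r * r < 1 := by nlinarith
  have hsum : Summable (fun t => y t ⬝ᵥ (Q i *ᵥ y t) + (K *ᵥ y t) ⬝ᵥ (R i *ᵥ (K *ᵥ y t))) := by
    apply Summable.of_nonneg_of_le hcnn hle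
    exact (summable_geometric_of_lt_one (mul_nonneg hr0 hr0) hrr1).mul_left _
  -- the tail term tends to zero
  set SP : ℝ := ∑ a, ∑ b, |(P i) a b| with hSP
  have hlb : ∀ T, 0 ≤ y T ⬝ᵥ (P i *ᵥ y T) := by
    intro T
    simpa using (hP i).dotProduct_mulVec_nonneg (y T)
  have hub : ∀ T, y T ⬝ᵥ (P i *ᵥ y T) ≤ (SP * (Cx * Cx)) * (r * r) ^ T := by
    intro T
    calc y T ⬝ᵥ (P i *ᵥ y T) ≤ SP * ((Cx * r ^ T) * (Cx * r ^ T)) :=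
          quad_bound' (P i) (y T) (Cx * r ^ T) (fun j => hyb T j)
      _ = (SP * (Cx * Cx)) * (r * r) ^ T := by rw [mul_pow]; ring
  have htail : Tendsto (fun T => y T ⬝ᵥ (P i *ᵥ y T)) atTop (nhds 0) := by
    apply squeeze_zero hlb hub
    have h2 : Tendsto (fun T : ℕ => (r * r) ^ T) atTop (nhds 0) :=
      tendsto_pow_atTop_nhds_zero_of_lt_one (mul_nonneg hr0 hr0) hrr1
    simpa using h2.const_mul (SP * (Cx * Cx))
  have hptail : Tendsto (fun T => x₀ ⬝ᵥ (P i *ᵥ x₀) - y T ⬝ᵥ (P i *ᵥ y T)) atTop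
      (nhds (x₀ ⬝ᵥ (P i *ᵥ x₀))) := by
    simpa using (tendsto_const_nhds (x := x₀ ⬝ᵥ (P i *ᵥ x₀)) (f := atTop)).sub htail
  exact le_of_tendsto_of_tendsto' hptail hsum.hasSum.tendsto_sum_nat hpartial
end
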